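/- arXiv:2409.02023 — 4 statements merged into one kernel-verified Lean document; each statement's English description precedes it below -/
import Mathlib

section
/- For any positive integer n, ∑_{d | n, d odd} 2·(-1)^n / d = ∑_{d | n, n/d odd} 2·(-1)^d / d + ∑_{d | n, n/d even} 1/d, where all sums are over positive divisors d of n satisfying the stated parity conditions. -/
/-!
For odd `n` every divisor `d` and its cofactor `n / d` are odd, so both sides equal `-2 ∑_{d ∣ n} 1/d`.
For `n = 2m` all signs are `+1`. Put `S = ∑_{d ∣ 2m} 1/d` and `T = ∑_{e ∣ m} 1/e`. The even divisors of
`2m` are the doubles of the divisors of `m`, so the odd divisors contribute `S - T/2`; and `2m/d` is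
even exactly when `d ∣ m`, so the `d` with `2m/d` odd contribute `S - T`. Both sides are `2S - T`.
-/

open Finset

theorem Finset.sum_filter_odd_add_sum_filter_even {ι M : Type*} [AddCommMonoid M] (s : Finset ι)
    (p : ι → ℕ) (f : ι → M) :
    ∑ x ∈ s with Odd (p x), f x + ∑ x ∈ s with Even (p x), f x = ∑ x ∈ s, f x := by
  simpa only [Nat.not_odd_iff_even] using sum_filter_add_sum_filter_not s (fun x => Odd (p x)) f

namespace Nat

theorem filter_dvd_div_divisors_mul {a : ℕ} (ha : a ≠ 0) (m : ℕ) :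
    {d ∈ (a * m).divisors | a ∣ a * m / d} = m.divisors := by
  ext d
  simp only [mem_filter, mem_divisors, mul_ne_zero_iff, ne_eq, ha, not_false_eq_true, true_and]
  constructor
  · rintro ⟨⟨hd, hm⟩, h⟩
    rw [Nat.dvd_div_iff_mul_dvd hd, mul_comm, Nat.mul_dvd_mul_iff_left (Nat.pos_of_ne_zero ha)] at h
    exact ⟨h, hm⟩
  · rintro ⟨hd, hm⟩
    refine ⟨⟨dvd_mul_of_dvd_right hd a, hm⟩, ?_⟩
    rw [Nat.mul_div_assoc a hd]
    exact dvd_mul_right a _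

theorem sum_divisors_mul_filter_dvd {M : Type*} [AddCommMonoid M] {a : ℕ} (ha : a ≠ 0) (m : ℕ)
    (f : ℕ → M) : ∑ d ∈ (a * m).divisors with a ∣ d, f d = ∑ e ∈ m.divisors, f (a * e) := by
  have : {d ∈ (a * m).divisors | a ∣ d} = m.divisors.image (a * ·) := by
    ext d
    simp only [mem_filter, mem_divisors, mem_image, mul_ne_zero_iff, ne_eq, ha, not_false_eq_true,
      true_and]
    constructor
    · rintro ⟨⟨hd, hm⟩, e, rfl⟩
      exact ⟨e, ⟨(Nat.mul_dvd_mul_iff_left (Nat.pos_of_ne_zero ha)).mp hd, hm⟩, rfl⟩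
    · rintro ⟨e, ⟨he, hm⟩, rfl⟩
      exact ⟨⟨mul_dvd_mul_left a he, hm⟩, dvd_mul_right a e⟩
  rw [this, sum_image fun x _ y _ h => mul_left_cancel₀ ha h]

theorem even_of_odd_div {n d : ℕ} (hn : Even n) (hd : d ∣ n) (h : Odd (n / d)) : Even d := by
  rw [← Nat.div_mul_cancel hd, Nat.even_mul] at hn
  exact hn.resolve_left (Nat.not_even_iff_odd.mpr h)

theorem sum_filter_odd_divisors_two_mul (m : ℕ) :
    ∑ d ∈ (2 * m).divisors with Odd d, 2 / (d : ℚ) =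
      ∑ d ∈ (2 * m).divisors with Odd (2 * m / d), 2 / (d : ℚ) +
        ∑ d ∈ (2 * m).divisors with Even (2 * m / d), 1 / (d : ℚ) := by
  have hEven : ∑ d ∈ (2 * m).divisors with Even d, 1 / (d : ℚ) =
      (∑ e ∈ m.divisors, 1 / (e : ℚ)) / 2 := by
    simp only [even_iff_two_dvd]
    rw [sum_divisors_mul_filter_dvd two_ne_zero, sum_div]
    refine sum_congr rfl fun e _ => ?_
    push_cast
    ring
  have hEvenDiv : ∑ d ∈ (2 * m).divisors with Even (2 * m / d), 1 / (d : ℚ) =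
      ∑ e ∈ m.divisors, 1 / (e : ℚ) := by
    simp only [even_iff_two_dvd]
    rw [filter_dvd_div_divisors_mul two_ne_zero]
  have hSplit := sum_filter_odd_add_sum_filter_even (2 * m).divisors (fun d => d)
    (fun d => 1 / (d : ℚ))
  have hSplitDiv := sum_filter_odd_add_sum_filter_even (2 * m).divisors (2 * m / ·)
    (fun d => 1 / (d : ℚ))
  simp only [← mul_one_div (2 : ℚ), ← mul_sum]
  linarith

end Nat

theorem stmt6_general (n : ℕ) :
    ∑ d ∈ n.divisors.filter (fun d => Odd d), 2 * (-1 : ℚ) ^ n / (d : ℚ) =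
      ∑ d ∈ n.divisors.filter (fun d => Odd (n / d)), 2 * (-1 : ℚ) ^ d / (d : ℚ) +
        ∑ d ∈ n.divisors.filter (fun d => Even (n / d)), 1 / (d : ℚ) := by
  rcases Nat.even_or_odd n with ⟨m, rfl⟩ | hn
  · rw [← two_mul, (even_two_mul m).neg_one_pow, mul_one]
    have hsigns : ∀ d ∈ {d ∈ (2 * m).divisors | Odd (2 * m / d)}, 2 * (-1 : ℚ) ^ d / d = 2 / d :=
      fun d hd => by
        rw [mem_filter, Nat.mem_divisors] at hd
        rw [(Nat.even_of_odd_div (even_two_mul m) hd.1.1 hd.2).neg_one_pow, mul_one]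
    rw [sum_congr rfl hsigns]
    exact Nat.sum_filter_odd_divisors_two_mul m
  · have hodd : ∀ d ∈ n.divisors, Odd d ∧ Odd (n / d) := fun d hd =>
      ⟨hn.of_dvd_nat (Nat.dvd_of_mem_divisors hd),
        hn.of_dvd_nat (Nat.div_dvd_of_dvd (Nat.dvd_of_mem_divisors hd))⟩
    rw [filter_true_of_mem fun d hd => (hodd d hd).1, filter_true_of_mem fun d hd => (hodd d hd).2,
      filter_false_of_mem fun d hd => Nat.not_even_iff_odd.mpr (hodd d hd).2, sum_empty, add_zero]
    exact sum_congr rfl fun d hd => by rw [hn.neg_one_pow, (hodd d hd).1.neg_one_pow]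

theorem stmt6 (n : ℕ) (hn : 0 < n) :
    ∑ d ∈ n.divisors.filter (fun d => Odd d), 2 * (-1 : ℚ) ^ n / (d : ℚ) =
      ∑ d ∈ n.divisors.filter (fun d => Odd (n / d)), 2 * (-1 : ℚ) ^ d / (d : ℚ) +
        ∑ d ∈ n.divisors.filter (fun d => Even (n / d)), 1 / (d : ℚ) :=
  stmt6_general n
end

section
/- Let s ≥ 4 be an integer and let q be a real number with 0 < q < 1. Then ∑_{j=0}^{∞} [ log(1 + q^{(s-2)j+1}) + log(1 + q^{(s-2)j+s-3}) + log(1 - q^{(s-2)(j+1)}) ] = - ∑_{n=1}^{∞} q^n · c_s(n), where c_s(n) := ∑_{d | n} (1/d)·((-1)^d · δ₁(n/d, s-2) + δ₂(n/d, s-2)), both series converging. -/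
/-- The function `δ₁(m, v)`. -/
def delta1 (m v : ℕ) : ℚ :=
  if m % 2 = 1 ∧ v = 2 then 2
  else if 3 ≤ v ∧ (m % v = 1 ∨ m % v = v - 1) then 1
  else 0

/-- The function `δ₂(m, v)`. -/
def delta2 (m v : ℕ) : ℚ := if m % v = 0 then 1 else 0

/-- `c_s(n) = ∑_{d ∣ n} (1/d)·((-1)^d·δ₁(n/d, s-2) + δ₂(n/d, s-2))`. -/
def cS (s n : ℕ) : ℚ :=
  ∑ d ∈ n.divisors,
    (1 / (d : ℚ)) * ((-1) ^ d * delta1 (n / d) (s - 2) + delta2 (n / d) (s - 2))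


/-!
With `v = s - 2`, expanding `log (1 ± x) = -∑_{d ≥ 1} (∓x) ^ d / d` turns the left-hand side
into minus the sum of the absolutely summable double family `(d, m) ↦ (∓q ^ m) ^ d / d`, where
`m` runs over the exponents `≡ 1` and `≡ v - 1 (mod v)` (factors `1 + q ^ m`) and the positive
multiples of `v` (factors `1 - q ^ m`). Summing the same family along the hyperbolas `d * m = n`
gives `q ^ n * c_s(n)`: `δ₁` counts the first two residue classes (twice when `v = 2`, where
they coincide) and `δ₂` the third.
-/

open Real

theorem HasSum.sum_divisorsAntidiagonal {E : Type*} [NormedAddCommGroup E] [CompleteSpace E]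
    {f : ℕ × ℕ → E} {a : E} (hf : HasSum f a) (hf0 : ∀ p : ℕ × ℕ, p.1 * p.2 = 0 → f p = 0) :
    HasSum (fun n : ℕ => ∑ p ∈ n.divisorsAntidiagonal, f p) a := by
  refine (hf.tsum_fiberwise fun p => p.1 * p.2).congr_fun fun n => ?_
  rcases eq_or_ne n 0 with rfl | hn
  · rw [Nat.divisorsAntidiagonal_zero, Finset.sum_empty,
      tsum_congr fun p : (fun p : ℕ × ℕ => p.1 * p.2) ⁻¹' {0} => hf0 p p.2, tsum_zero]
  · have hfiber : (fun p : ℕ × ℕ => p.1 * p.2) ⁻¹' {n} = ↑n.divisorsAntidiagonal := by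
      ext; simp [hn]
    rw [hfiber, Finset.tsum_subtype']

/-- Summed over `d`, these terms give `-log (1 - ε * q ^ m)`; the term with `d = 0` is
`1 / 0 = 0`. -/
noncomputable def logSeriesFamily (ε q : ℝ) (P : ℕ → Prop) [DecidablePred P] (p : ℕ × ℕ) : ℝ :=
  if P p.2 then (ε * q ^ p.2) ^ p.1 / p.1 else 0

section LogSeriesFamily

variable {ε q : ℝ} {P : ℕ → Prop} [DecidablePred P]

lemma logSeriesFamily_eq_zero_of_mul_eq_zero (hP : ¬P 0) {p : ℕ × ℕ} (hp : p.1 * p.2 = 0) :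
    logSeriesFamily ε q P p = 0 := by
  obtain ⟨d, m⟩ := p
  rcases Nat.mul_eq_zero.1 hp with rfl | rfl <;> simp [logSeriesFamily, hP]

lemma pow_mul_le_inv_mul_pow_mul_pow (hq0 : 0 < q) (hq1 : q ≤ 1) {d m : ℕ} (hd : d ≠ 0)
    (hm : m ≠ 0) : q ^ (d * m) ≤ q⁻¹ * (q ^ d * q ^ m) := by
  have hexp : d + m = (d + m - 1) + 1 := by omega
  rw [← pow_add, hexp, pow_succ', inv_mul_cancel_left₀ hq0.ne']
  exact pow_le_pow_of_le_one hq0.le hq1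
    (by nlinarith [Nat.one_le_iff_ne_zero.2 hd, Nat.one_le_iff_ne_zero.2 hm])

lemma summable_logSeriesFamily (hε : |ε| ≤ 1) (hq0 : 0 < q) (hq1 : q < 1) (hP : ¬P 0) :
    Summable (logSeriesFamily ε q P) := by
  have hgeom := summable_geometric_of_lt_one hq0.le hq1
  refine Summable.of_norm_bounded ((hgeom.mul_of_nonneg hgeom (fun _ => by positivity)
    (fun _ => by positivity)).mul_left q⁻¹) fun ⟨d, m⟩ => ?_
  rcases eq_or_ne (d * m) 0 with hdm | hdm
  · rw [logSeriesFamily_eq_zero_of_mul_eq_zero hP hdm, norm_zero]; positivity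
  obtain ⟨hd, hm⟩ := mul_ne_zero_iff.1 hdm
  simp only [logSeriesFamily]
  split_ifs
  · have hbase : ‖ε * q ^ m‖ ≤ q ^ m := by
      rw [norm_mul, Real.norm_eq_abs, Real.norm_eq_abs, abs_of_pos (pow_pos hq0 m)]
      exact mul_le_of_le_one_left (by positivity) hε
    calc ‖(ε * q ^ m) ^ d / d‖ = ‖ε * q ^ m‖ ^ d / d := by
          rw [norm_div, norm_pow, RCLike.norm_natCast]
      _ ≤ (q ^ m) ^ d / d := by gcongr
      _ ≤ q ^ (d * m) := by
          rw [pow_mul']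
          exact div_le_self (by positivity) (Nat.one_le_cast.2 (Nat.one_le_iff_ne_zero.2 hd))
      _ ≤ _ := pow_mul_le_inv_mul_pow_mul_pow hq0 hq1.le hd hm
  · rw [norm_zero]; positivity

lemma hasSum_logSeriesFamily_iff {e : ℕ → ℕ} (he : Function.Injective e)
    (hPe : ∀ m, P m ↔ ∃ j, e j = m) {a : ℝ} :
    HasSum (fun p : ℕ × ℕ => (ε * q ^ e p.1) ^ (p.2 + 1) / (p.2 + 1)) a ↔
      HasSum (logSeriesFamily ε q P) a := by
  have hinj : Function.Injective fun p : ℕ × ℕ => (p.2 + 1, e p.1) := fun p p' h => by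
    simp only [Prod.mk.injEq, Nat.add_right_cancel_iff] at h
    exact Prod.ext (he h.2) h.1
  have hsupp : ∀ p ∉ Set.range fun p : ℕ × ℕ => (p.2 + 1, e p.1), logSeriesFamily ε q P p = 0 := by
    rintro ⟨d, m⟩ hp
    simp only [logSeriesFamily]
    split_ifs with hm
    · obtain ⟨j, rfl⟩ := (hPe m).1 hm
      rcases d with _ | d
      · simp
      · exact absurd ⟨(j, d), rfl⟩ hp
    · rfl
  rw [← hinj.hasSum_iff hsupp]
  congr! 2 with ⟨j, d⟩
  simp [logSeriesFamily, hPe]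

lemma hasSum_pow_succ_div_succ (hε : |ε| ≤ 1) (hq0 : 0 < q) (hq1 : q < 1) {a : ℕ} (ha : a ≠ 0) :
    HasSum (fun d : ℕ => (ε * q ^ a) ^ (d + 1) / (d + 1)) (-log (1 - ε * q ^ a)) := by
  refine Real.hasSum_pow_div_log_of_abs_lt_one ?_
  rw [abs_mul, abs_of_pos (pow_pos hq0 a)]
  exact (mul_le_of_le_one_left (by positivity) hε).trans_lt (pow_lt_one₀ hq0.le hq1 ha)

end LogSeriesFamily

lemma exists_mul_add_eq_iff_mod_eq {v r m : ℕ} (hr : r < v) : (∃ j, v * j + r = m) ↔ m % v = r := by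
  constructor
  · rintro ⟨j, rfl⟩
    rw [Nat.mul_add_mod, Nat.mod_eq_of_lt hr]
  · intro h
    exact ⟨m / v, by rw [← h, Nat.div_add_mod]⟩

lemma exists_mul_succ_eq_iff {v m : ℕ} (hv : 0 < v) :
    (∃ j, v * (j + 1) = m) ↔ m ≠ 0 ∧ m % v = 0 := by
  constructor
  · rintro ⟨j, rfl⟩
    exact ⟨mul_ne_zero hv.ne' j.succ_ne_zero, Nat.mul_mod_right v _⟩
  · rintro ⟨hm, hmv⟩
    obtain ⟨k, rfl⟩ := Nat.dvd_of_mod_eq_zero hmv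
    exact ⟨k - 1, by rw [Nat.sub_add_cancel (Nat.pos_of_ne_zero (right_ne_zero_of_mul hm))]⟩

noncomputable def jacobiLogFamily (v : ℕ) (q : ℝ) : ℕ × ℕ → ℝ :=
  logSeriesFamily (-1) q (· % v = 1) + logSeriesFamily (-1) q (· % v = v - 1) +
    logSeriesFamily 1 q (fun m => m ≠ 0 ∧ m % v = 0)

section JacobiLogFamily

variable {v : ℕ} {q : ℝ}

lemma delta1_cast_eq (hv : 2 ≤ v) (m : ℕ) :
    (delta1 m v : ℝ) = (if m % v = 1 then 1 else 0) + (if m % v = v - 1 then 1 else 0) := by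
  unfold delta1
  rcases hv.eq_or_lt with rfl | hv3
  · split_ifs <;> norm_num <;> omega
  · split_ifs <;> norm_num <;> omega

lemma delta2_cast_eq (m : ℕ) : (delta2 m v : ℝ) = if m % v = 0 then 1 else 0 := by
  unfold delta2
  split_ifs <;> norm_num

lemma jacobiLogFamily_apply (hv : 2 ≤ v) {m : ℕ} (hm : m ≠ 0) (d : ℕ) :
    jacobiLogFamily v q (d, m) =
      q ^ (d * m) * (1 / d * ((-1) ^ d * delta1 m v + delta2 m v)) := by
  simp only [jacobiLogFamily, Pi.add_apply, logSeriesFamily, delta1_cast_eq hv, delta2_cast_eq,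
    mul_pow, ← pow_mul, hm, ne_eq, not_false_eq_true, true_and]
  split_ifs <;> ring

lemma summable_jacobiLogFamily (hv : 2 ≤ v) (hq0 : 0 < q) (hq1 : q < 1) :
    Summable (jacobiLogFamily v q) := by
  have h1 : |(-1 : ℝ)| ≤ 1 := by simp
  have h2 : |(1 : ℝ)| ≤ 1 := by simp
  exact ((summable_logSeriesFamily h1 hq0 hq1 (by simp)).add
    (summable_logSeriesFamily h1 hq0 hq1 (by rw [Nat.zero_mod]; omega))).add
    (summable_logSeriesFamily h2 hq0 hq1 (by simp))

lemma hasSum_neg_log_jacobiLogFamily (hv : 2 ≤ v) (hq0 : 0 < q) (hq1 : q < 1) :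
    HasSum (fun j : ℕ => -(log (1 + q ^ (v * j + 1)) + log (1 + q ^ (v * j + (v - 1))) +
      log (1 - q ^ (v * (j + 1))))) (∑' p, jacobiLogFamily v q p) := by
  have hε₁ : |(-1 : ℝ)| ≤ 1 := by simp
  have hε₂ : |(1 : ℝ)| ≤ 1 := by simp
  have hv0 : 0 < v := by omega
  have hinj (r : ℕ) : Function.Injective fun j => v * j + r := fun a b h =>
    Nat.eq_of_mul_eq_mul_left hv0 (Nat.add_right_cancel h)
  have h1 := (summable_logSeriesFamily hε₁ hq0 hq1 (P := (· % v = 1)) (by simp)).hasSum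
  have h2 := (summable_logSeriesFamily hε₁ hq0 hq1 (P := (· % v = v - 1))
    (by rw [Nat.zero_mod]; omega)).hasSum
  have h3 := (summable_logSeriesFamily hε₂ hq0 hq1 (P := fun m => m ≠ 0 ∧ m % v = 0)
    (by simp)).hasSum
  rw [show ∑' p, jacobiLogFamily v q p = _ from ((h1.add h2).add h3).tsum_eq]
  replace h1 := (hasSum_logSeriesFamily_iff (hinj 1)
    fun m => (exists_mul_add_eq_iff_mod_eq (by omega)).symm).2 h1
  replace h2 := (hasSum_logSeriesFamily_iff (hinj (v - 1))
    fun m => (exists_mul_add_eq_iff_mod_eq (by omega)).symm).2 h2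
  replace h3 := (hasSum_logSeriesFamily_iff
    (fun a b h => Nat.succ_injective (Nat.eq_of_mul_eq_mul_left hv0 h))
    fun m => (exists_mul_succ_eq_iff hv0).symm).2 h3
  refine ((h1.add h2).add h3).prod_fiberwise fun j => ?_
  convert ((hasSum_pow_succ_div_succ hε₁ hq0 hq1 (a := v * j + 1) (by omega)).add
    (hasSum_pow_succ_div_succ hε₁ hq0 hq1 (a := v * j + (v - 1)) (by omega))).add
    (hasSum_pow_succ_div_succ hε₂ hq0 hq1 (a := v * (j + 1)) (by positivity)) using 1
  simp only [neg_one_mul, sub_neg_eq_add, one_mul]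
  ring

lemma sum_divisorsAntidiagonal_jacobiLogFamily (hv : 2 ≤ v) (n : ℕ) :
    ∑ p ∈ n.divisorsAntidiagonal, jacobiLogFamily v q p = q ^ n * (cS (v + 2) n : ℝ) := by
  rw [Nat.sum_divisorsAntidiagonal (fun d m => jacobiLogFamily v q (d, m)), cS, Rat.cast_sum,
    Finset.mul_sum, Nat.add_sub_cancel]
  refine Finset.sum_congr rfl fun d hd => ?_
  have hquot : n / d ≠ 0 :=
    (Nat.div_pos (Nat.divisor_le hd) (Nat.pos_of_mem_divisors hd)).ne'
  rw [jacobiLogFamily_apply hv hquot, Nat.mul_div_cancel' (Nat.dvd_of_mem_divisors hd)]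
  push_cast
  ring

lemma hasSum_pow_mul_cS (hv : 2 ≤ v) (hq0 : 0 < q) (hq1 : q < 1) :
    HasSum (fun n : ℕ => q ^ n * (cS (v + 2) n : ℝ)) (∑' p, jacobiLogFamily v q p) := by
  refine ((summable_jacobiLogFamily hv hq0 hq1).hasSum.sum_divisorsAntidiagonal fun p hp => ?_)
    |>.congr_fun fun n => (sum_divisorsAntidiagonal_jacobiLogFamily hv n).symm
  simp only [jacobiLogFamily, Pi.add_apply]
  rw [logSeriesFamily_eq_zero_of_mul_eq_zero (by simp) hp,
    logSeriesFamily_eq_zero_of_mul_eq_zero (by rw [Nat.zero_mod]; omega) hp,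
    logSeriesFamily_eq_zero_of_mul_eq_zero (by simp) hp, add_zero, add_zero]

end JacobiLogFamily

theorem stmt9 (s : ℕ) (hs : 4 ≤ s) (q : ℝ) (hq0 : 0 < q) (hq1 : q < 1) :
    (Summable fun j : ℕ =>
        Real.log (1 + q ^ ((s - 2) * j + 1)) + Real.log (1 + q ^ ((s - 2) * j + (s - 3))) +
          Real.log (1 - q ^ ((s - 2) * (j + 1)))) ∧
      (Summable fun n : ℕ => q ^ (n + 1) * ((cS s (n + 1) : ℝ))) ∧
      (∑' j : ℕ,
          (Real.log (1 + q ^ ((s - 2) * j + 1)) + Real.log (1 + q ^ ((s - 2) * j + (s - 3))) +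
            Real.log (1 - q ^ ((s - 2) * (j + 1))))) =
        - ∑' n : ℕ, q ^ (n + 1) * ((cS s (n + 1) : ℝ)) := by
  obtain ⟨v, rfl⟩ : ∃ v, s = v + 2 := ⟨s - 2, by omega⟩
  have hv : 2 ≤ v := by omega
  rw [show v + 2 - 2 = v by omega, show v + 2 - 3 = v - 1 by omega]
  have hlog := (hasSum_neg_log_jacobiLogFamily hv hq0 hq1).neg
  simp only [neg_neg] at hlog
  have hcS := (hasSum_nat_add_iff' 1).2 (hasSum_pow_mul_cS hv hq0 hq1)
  have hcS0 : (cS (v + 2) 0 : ℝ) = 0 := by simp [cS]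
  simp only [Finset.sum_range_one, hcS0, mul_zero, sub_zero] at hcS
  exact ⟨hlog.summable, hcS.summable, by rw [hlog.tsum_eq, hcS.tsum_eq]⟩
end

section
/- For each positive integer n and all positive integers k, m with n = 2^k · m and m odd and m > 1: ∑_{d | n, n/d odd} 2·(-1)^d / d + ∑_{d | n, n/d even} 1/d = ∑_{d | n, d odd} 2/d, where all sums are over positive divisors d of n satisfying the stated conditions. -/
/-!
A divisor of `2 ^ k * m` with `m` odd is uniquely `2 ^ j * e` with `j ≤ k` and `e ∣ m`; the
cofactor is odd exactly when `j = k`, and the divisor itself is odd exactly when `j = 0`. Hence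
both sides are multiples of `S = ∑_{e ∣ m} 1 / e`: the left side is
`(2 / 2 ^ k + ∑_{j < k} 1 / 2 ^ j) * S = 2 * S` (the sign `(-1) ^ d` is `1` since `k ≥ 1`), and
the right side is `2 * S`.
-/

open Finset

theorem Nat.Coprime.sum_divisors_mul_eq_sum_sum {M : Type*} [AddCommMonoid M] {a b : ℕ}
    (hab : a.Coprime b) (f : ℕ → M) :
    ∑ d ∈ (a * b).divisors, f d = ∑ i ∈ a.divisors, ∑ j ∈ b.divisors, f (i * j) := by
  rw [Nat.divisors_mul, Finset.mul_def, sum_image hab.mul_injOn_divisors, sum_product]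

theorem Nat.sum_divisors_two_pow_mul {M : Type*} [AddCommMonoid M] {m : ℕ} (hm : Odd m) (k : ℕ)
    (f : ℕ → M) :
    ∑ d ∈ (2 ^ k * m).divisors, f d = ∑ j ∈ range (k + 1), ∑ e ∈ m.divisors, f (2 ^ j * e) := by
  rw [(Nat.coprime_two_left.mpr hm).pow_left k |>.sum_divisors_mul_eq_sum_sum,
    Nat.sum_divisors_prime_pow Nat.prime_two]

theorem Nat.odd_two_pow_iff {j : ℕ} : Odd (2 ^ j) ↔ j = 0 := by
  rw [← Nat.not_even_iff_odd, Nat.even_pow]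
  simp

theorem Nat.odd_two_pow_mul_div_two_pow_mul {m e j k : ℕ} (hm : Odd m) (he : e ∣ m)
    (hj : j ≤ k) :
    Odd (2 ^ k * m / (2 ^ j * e)) ↔ j = k := by
  rw [Nat.mul_div_mul_comm (pow_dvd_pow 2 hj) he, Nat.pow_div hj two_pos, Nat.odd_mul,
    Nat.odd_two_pow_iff]
  have : Odd (m / e) := hm.of_dvd_nat (Nat.div_dvd_of_dvd he)
  simp only [this, and_true]
  omega

theorem Nat.odd_two_pow_mul {e : ℕ} (he : Odd e) (j : ℕ) : Odd (2 ^ j * e) ↔ j = 0 := by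
  rw [Nat.odd_mul, Nat.odd_two_pow_iff]
  simp [he]

theorem Nat.sum_filter_odd_div_divisors_two_pow_mul {M : Type*} [AddCommMonoid M] {m : ℕ}
    (hm : Odd m) (k : ℕ) (f : ℕ → M) :
    ∑ d ∈ (2 ^ k * m).divisors with Odd (2 ^ k * m / d), f d =
      ∑ e ∈ m.divisors, f (2 ^ k * e) := by
  rw [sum_filter, Nat.sum_divisors_two_pow_mul hm, sum_range_succ, sum_eq_zero, zero_add]
  · exact sum_congr rfl fun e he => if_pos <|
      (Nat.odd_two_pow_mul_div_two_pow_mul hm (Nat.dvd_of_mem_divisors he) le_rfl).mpr rfl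
  · intro j hj
    exact sum_eq_zero fun e he => if_neg <| by
      rw [Nat.odd_two_pow_mul_div_two_pow_mul hm (Nat.dvd_of_mem_divisors he)
        (mem_range.mp hj).le]
      exact (mem_range.mp hj).ne

theorem Nat.sum_filter_even_div_divisors_two_pow_mul {M : Type*} [AddCommMonoid M] {m : ℕ}
    (hm : Odd m) (k : ℕ) (f : ℕ → M) :
    ∑ d ∈ (2 ^ k * m).divisors with Even (2 ^ k * m / d), f d =
      ∑ j ∈ range k, ∑ e ∈ m.divisors, f (2 ^ j * e) := by
  simp only [← Nat.not_odd_iff_even]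
  rw [sum_filter, Nat.sum_divisors_two_pow_mul hm, sum_range_succ, sum_eq_zero (s := m.divisors),
    add_zero]
  · refine sum_congr rfl fun j hj => sum_congr rfl fun e he => if_pos <| ?_
    rw [Nat.odd_two_pow_mul_div_two_pow_mul hm (Nat.dvd_of_mem_divisors he)
      (mem_range.mp hj).le]
    exact (mem_range.mp hj).ne
  · exact fun e he => if_neg <| not_not.mpr <|
      (Nat.odd_two_pow_mul_div_two_pow_mul hm (Nat.dvd_of_mem_divisors he) le_rfl).mpr rfl

theorem Nat.sum_filter_odd_divisors_two_pow_mul {M : Type*} [AddCommMonoid M] {m : ℕ}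
    (hm : Odd m) (k : ℕ) (f : ℕ → M) :
    ∑ d ∈ (2 ^ k * m).divisors with Odd d, f d = ∑ e ∈ m.divisors, f e := by
  rw [sum_filter, Nat.sum_divisors_two_pow_mul hm, sum_range_succ', sum_eq_zero, zero_add]
  · refine sum_congr rfl fun e he => ?_
    rw [pow_zero, one_mul, if_pos (hm.of_dvd_nat (Nat.dvd_of_mem_divisors he))]
  · intro j _
    exact sum_eq_zero fun e he => if_neg <| by
      rw [Nat.odd_two_pow_mul (hm.of_dvd_nat (Nat.dvd_of_mem_divisors he))]
      exact j.succ_ne_zero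

theorem sum_range_one_div_two_pow_add (k : ℕ) :
    ∑ j ∈ range k, (1 : ℚ) / 2 ^ j + 2 / 2 ^ k = 2 := by
  induction k with
  | zero => norm_num
  | succ k ih =>
    have halve : (2 : ℚ) / 2 ^ (k + 1) = 1 / 2 ^ k := by
      rw [pow_succ]
      field_simp
    rw [sum_range_succ, halve, add_assoc, ← add_div, one_add_one_eq_two, ih]

theorem stmt11_general (n k m : ℕ) (hk : 0 < k) (hm : Odd m)
    (hn : n = 2 ^ k * m) :
    ∑ d ∈ n.divisors.filter (fun d => Odd (n / d)), 2 * (-1 : ℚ) ^ d / (d : ℚ) +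
        ∑ d ∈ n.divisors.filter (fun d => Even (n / d)), 1 / (d : ℚ) =
      ∑ d ∈ n.divisors.filter (fun d => Odd d), 2 / (d : ℚ) := by
  subst hn
  set S := ∑ e ∈ m.divisors, (1 : ℚ) / e
  have h2k : Even (2 ^ k) := Nat.even_pow.mpr ⟨even_two, hk.ne'⟩
  have odd_part : ∑ e ∈ m.divisors, 2 * (-1 : ℚ) ^ (2 ^ k * e) / ((2 ^ k * e : ℕ) : ℚ) =
      2 / 2 ^ k * S := by
    rw [mul_sum]
    refine sum_congr rfl fun e _ => ?_
    rw [(h2k.mul_right e).neg_one_pow]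
    push_cast
    ring
  have even_part : ∑ j ∈ range k, ∑ e ∈ m.divisors, 1 / ((2 ^ j * e : ℕ) : ℚ) =
      (∑ j ∈ range k, (1 : ℚ) / 2 ^ j) * S := by
    rw [sum_mul_sum]
    refine sum_congr rfl fun j _ => sum_congr rfl fun e _ => ?_
    push_cast
    ring
  have odd_divisors : ∑ e ∈ m.divisors, (2 : ℚ) / e = 2 * S := by
    simp only [S, mul_sum, mul_one_div]
  rw [Nat.sum_filter_odd_div_divisors_two_pow_mul hm,
    Nat.sum_filter_even_div_divisors_two_pow_mul hm, Nat.sum_filter_odd_divisors_two_pow_mul hm,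
    odd_part, even_part, odd_divisors, ← add_mul, add_comm, sum_range_one_div_two_pow_add]

theorem stmt11 (n k m : ℕ) (hk : 0 < k) (hm : Odd m) (hm1 : 1 < m)
    (hn : n = 2 ^ k * m) :
    ∑ d ∈ n.divisors.filter (fun d => Odd (n / d)), 2 * (-1 : ℚ) ^ d / (d : ℚ) +
        ∑ d ∈ n.divisors.filter (fun d => Even (n / d)), 1 / (d : ℚ) =
      ∑ d ∈ n.divisors.filter (fun d => Odd d), 2 / (d : ℚ) :=
  stmt11_general n k m hk hm hn
end

section
/- For each positive integer n of the form n = 2^k · m with k ≥ 2 and m odd: ∑_{d | n, n/d odd} (-1)^d / d + ∑_{d | n, n/d ≡ 0 (mod 4)} 1/d = (2 - 3/2^k) · ∑_{d | n, d odd} 1/d, where all sums are over positive divisors d of n satisfying the stated conditions. -/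
/-!
Write `n = 2 ^ k * m` and `σ = ∑_{e ∣ m} 1 / e`. The odd divisors of `n` are the divisors of `m`,
so the right-hand side is `(2 - 3 / 2 ^ k) σ`. The divisors `d` with `n / d` odd are the `2 ^ k e`
with `e ∣ m`; they are even, so the first sum is `σ / 2 ^ k`. The divisors `d` with `4 ∣ n / d` are
the divisors of `n / 4 = 2 ^ (k - 2) m`, and since `d ↦ 1 / d` is multiplicative their reciprocals
sum to `(2 - 1 / 2 ^ (k - 2)) σ`. Adding up gives `(2 - 3 / 2 ^ k) σ`.
-/

open Finset

theorem Nat.Coprime.sum_divisors_mul_of_map_mul {R : Type*} [CommSemiring R] {a b : ℕ}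
    (hab : a.Coprime b) (f : ℕ → R) (hf : ∀ x y, f (x * y) = f x * f y) :
    ∑ d ∈ (a * b).divisors, f d = (∑ d ∈ a.divisors, f d) * ∑ d ∈ b.divisors, f d := by
  rw [hab.divisors_mul, sum_map, sum_mul_sum, ← sum_product']
  exact (sum_attach _ fun p : ℕ × ℕ => f (p.1 * p.2)).trans (sum_congr rfl fun p _ => hf p.1 p.2)

theorem Nat.sum_inv_divisors_two_pow (j : ℕ) :
    ∑ d ∈ (2 ^ j : ℕ).divisors, 1 / (d : ℚ) = 2 - 1 / 2 ^ j := by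
  rw [Nat.sum_divisors_prime_pow Nat.prime_two]
  induction j with
  | zero => norm_num
  | succ j ih =>
    rw [sum_range_succ, ih]
    push_cast
    field_simp
    ring

theorem Nat.sum_inv_divisors_two_pow_mul (j : ℕ) {m : ℕ} (hm : Odd m) :
    ∑ d ∈ (2 ^ j * m).divisors, 1 / (d : ℚ) = (2 - 1 / 2 ^ j) * ∑ d ∈ m.divisors, 1 / (d : ℚ) := by
  rw [(Nat.Coprime.pow_left j (Nat.coprime_two_left.mpr hm)).sum_divisors_mul_of_map_mul _
    (fun x y => by push_cast; rw [one_div_mul_one_div]), Nat.sum_inv_divisors_two_pow]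

theorem Nat.divisors_filter_odd_two_pow_mul (k : ℕ) {m : ℕ} (hm : Odd m) :
    (2 ^ k * m).divisors.filter Odd = m.divisors := by
  ext d
  simp only [mem_filter, mem_divisors]
  constructor
  · rintro ⟨⟨hd, hn⟩, hodd⟩
    exact ⟨(Nat.Coprime.pow_right k (Nat.coprime_two_right.mpr hodd)).dvd_of_dvd_mul_left hd,
      right_ne_zero_of_mul hn⟩
  · rintro ⟨hd, hm0⟩
    exact ⟨⟨Dvd.dvd.mul_left hd _, by positivity⟩, hm.of_dvd_nat hd⟩

theorem Nat.divisors_filter_odd_div_two_pow_mul (k : ℕ) {m : ℕ} (hm : Odd m) :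
    (2 ^ k * m).divisors.filter (fun d => Odd (2 ^ k * m / d)) =
      m.divisors.map ⟨(2 ^ k * ·), mul_right_injective₀ (by positivity)⟩ := by
  ext d
  simp only [mem_filter, mem_divisors, mem_map, Function.Embedding.coeFn_mk]
  constructor
  · rintro ⟨⟨⟨c, hc⟩, hn⟩, hodd⟩
    have hcd : 2 ^ k * m / d = c := by
      rw [hc, Nat.mul_div_cancel_left _ (Nat.pos_of_ne_zero (left_ne_zero_of_mul (hc ▸ hn)))]
    rw [hcd] at hodd
    obtain ⟨e, rfl⟩ : 2 ^ k ∣ d :=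
      (Nat.Coprime.pow_left k (Nat.coprime_two_left.mpr hodd)).dvd_of_dvd_mul_right ⟨m, hc.symm⟩
    refine ⟨e, ⟨⟨c, ?_⟩, right_ne_zero_of_mul hn⟩, rfl⟩
    rw [mul_assoc] at hc
    exact Nat.eq_of_mul_eq_mul_left (by positivity) hc
  · rintro ⟨e, ⟨hd, hm0⟩, rfl⟩
    refine ⟨⟨mul_dvd_mul_left _ hd, by positivity⟩, ?_⟩
    rw [Nat.mul_div_mul_left _ _ (by positivity)]
    exact hm.of_dvd_nat (Nat.div_dvd_of_dvd hd)

theorem Nat.divisors_filter_dvd_div {n a : ℕ} (hn : n ≠ 0) (ha : a ∣ n) :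
    n.divisors.filter (fun d => a ∣ n / d) = (n / a).divisors := by
  have hna : n / a ≠ 0 := (Nat.div_ne_zero_iff_of_dvd ha).mpr ⟨hn, ne_zero_of_dvd_ne_zero hn ha⟩
  ext d
  simp only [mem_filter, mem_divisors, ne_eq, hn, hna, not_false_eq_true, and_true]
  constructor
  · rintro ⟨hd, had⟩
    rwa [Nat.dvd_div_iff_mul_dvd ha, mul_comm, ← Nat.dvd_div_iff_mul_dvd hd]
  · intro hd
    have hdn : d ∣ n := hd.trans (Nat.div_dvd_of_dvd ha)
    refine ⟨hdn, ?_⟩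
    rwa [Nat.dvd_div_iff_mul_dvd hdn, mul_comm, ← Nat.dvd_div_iff_mul_dvd ha]

theorem stmt12 (n k m : ℕ) (hk : 2 ≤ k) (hm : Odd m) (hn : n = 2 ^ k * m) :
    ∑ d ∈ n.divisors.filter (fun d => Odd (n / d)), (-1 : ℚ) ^ d / (d : ℚ) +
        ∑ d ∈ n.divisors.filter (fun d => n / d % 4 = 0), 1 / (d : ℚ) =
      (2 - 3 / (2 : ℚ) ^ k) * ∑ d ∈ n.divisors.filter (fun d => Odd d), 1 / (d : ℚ) := by
  obtain ⟨j, rfl⟩ := Nat.exists_eq_add_of_le' hk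
  subst hn
  have hm0 : m ≠ 0 := hm.pos.ne'
  have h4 : 2 ^ (j + 2) * m = 4 * (2 ^ j * m) := by ring
  have hfour : (2 ^ (j + 2) * m).divisors.filter (fun d => 2 ^ (j + 2) * m / d % 4 = 0) =
      (2 ^ j * m).divisors := by
    simp_rw [← Nat.dvd_iff_mod_eq_zero]
    rw [Nat.divisors_filter_dvd_div (by positivity) (h4 ▸ dvd_mul_right 4 _), h4,
      Nat.mul_div_cancel_left _ four_pos]
  have hterm : ∀ e ∈ m.divisors, (-1 : ℚ) ^ (2 ^ (j + 2) * e) / ((2 ^ (j + 2) * e : ℕ) : ℚ) =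
      1 / 2 ^ (j + 2) * (1 / e) := by
    intro e _
    rw [(Nat.even_pow.mpr ⟨even_two, by omega⟩).mul_right e |>.neg_one_pow]
    push_cast
    rw [one_div_mul_one_div]
  rw [Nat.divisors_filter_odd_div_two_pow_mul _ hm, hfour, Nat.divisors_filter_odd_two_pow_mul _ hm,
    sum_map, Nat.sum_inv_divisors_two_pow_mul _ hm]
  simp only [Function.Embedding.coeFn_mk]
  rw [sum_congr rfl hterm, ← mul_sum]
  field_simp
  ring
end
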